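/- arXiv:2407.06431 — 3 statements merged into one kernel-verified Lean document; each statement's English description precedes it below -/
import Mathlib

section
/- Let β = 1+ε with ε > 0, L a positive integer, and lev, plev : U → ℤ functions on a finite set U with 0 ≤ lev(e) ≤ plev(e) ≤ L. Define A_k = {e : lev(e) ≤ k < plev(e)} and P_k = {e : plev(e) ≤ k}. If |P_k| ≤ 2ε·|A_k| holds for all 0 ≤ k ≤ L−1, then ∑_{e∈U} (β^{−lev(e)} − β^{−L}) ≤ (1+2ε) · ∑_{e∈U} (β^{−lev(e)} − β^{−plev(e)}). -/
/-- if `|P_k| ≤ 2ε·|A_k|` for all levels, then the weighted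
level sum satisfies the `(1+2ε)` bound. -/
theorem passive_active_ratio_bound {α : Type*} [DecidableEq α]
    (ε : ℝ) (hε : 0 < ε) (L : ℕ) (hL : 0 < L)
    (U : Finset α) (lev plev : α → ℤ)
    (hbounds : ∀ e ∈ U, 0 ≤ lev e ∧ lev e ≤ plev e ∧ plev e ≤ (L : ℤ))
    (hratio : ∀ k ∈ Finset.range L,
      ((U.filter fun e => plev e ≤ (k : ℤ)).card : ℝ)
        ≤ 2 * ε * ((U.filter fun e => lev e ≤ (k : ℤ) ∧ (k : ℤ) < plev e).card : ℝ)) :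
    ∑ e ∈ U, ((1 + ε) ^ (-(lev e)) - (1 + ε) ^ (-(L : ℤ)))
      ≤ (1 + 2 * ε) * ∑ e ∈ U, ((1 + ε) ^ (-(lev e)) - (1 + ε) ^ (-(plev e))) := by
  have hβ : (1:ℝ) < 1 + ε := by linarith
  have hβ0 : (0:ℝ) < 1 + ε := by linarith
  set f : ℕ → ℝ := fun k => (1+ε) ^ (-(k:ℤ)) - (1+ε) ^ (-((k:ℤ)+1)) with hf
  have hf0 : ∀ k, 0 ≤ f k := by
    intro k
    have : (1+ε) ^ (-((k:ℤ)+1)) ≤ (1+ε) ^ (-(k:ℤ)) :=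
      zpow_le_zpow_right₀ hβ.le (by linarith)
    simpa [hf] using sub_nonneg.mpr this
  have hg : ∀ n : ℕ, ∑ k ∈ Finset.range n, f k = 1 - (1+ε) ^ (-(n:ℤ)) := by
    intro n
    induction n with
    | zero => simp
    | succ n ih =>
      rw [Finset.sum_range_succ, ih, hf]
      push_cast
      ring
  have tele : ∀ a b : ℤ, 0 ≤ a → a ≤ b → b ≤ (L:ℤ) →
      (1+ε) ^ (-a) - (1+ε) ^ (-b)
        = ∑ k ∈ Finset.range L, if a ≤ (k:ℤ) ∧ (k:ℤ) < b then f k else 0 := by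
    intro a b ha hab hbL
    obtain ⟨a', rfl⟩ := Int.eq_ofNat_of_zero_le ha
    obtain ⟨b', rfl⟩ := Int.eq_ofNat_of_zero_le (le_trans ha hab)
    have hab' : a' ≤ b' := by exact_mod_cast hab
    have hbL' : b' ≤ L := by exact_mod_cast hbL
    have hset : (Finset.range L).filter (fun k : ℕ => (a':ℤ) ≤ (k:ℤ) ∧ (k:ℤ) < (b':ℤ))
        = Finset.Ico a' b' := by
      ext k
      simp only [Finset.mem_filter, Finset.mem_range, Finset.mem_Ico]
      omega
    rw [← Finset.sum_filter, hset, Finset.sum_Ico_eq_sub _ hab', hg, hg]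
    ring
  have card_sum : ∀ (p : α → Prop) [DecidablePred p] (c : ℝ),
      ∑ e ∈ U, (if p e then c else 0) = ((U.filter p).card : ℝ) * c := by
    intro p _ c
    rw [← Finset.sum_filter, Finset.sum_const, nsmul_eq_mul]
  have hLHS : ∑ e ∈ U, ((1 + ε) ^ (-(lev e)) - (1 + ε) ^ (-(L : ℤ)))
      = ∑ k ∈ Finset.range L,
          ((U.filter fun e => lev e ≤ (k:ℤ) ∧ (k:ℤ) < (L:ℤ)).card : ℝ) * f k := by
    rw [Finset.sum_congr rfl (fun e he =>
      tele (lev e) (L:ℤ) (hbounds e he).1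
        (le_trans (hbounds e he).2.1 (hbounds e he).2.2) le_rfl), Finset.sum_comm]
    exact Finset.sum_congr rfl fun k _ => card_sum _ _
  have hRHS : ∑ e ∈ U, ((1 + ε) ^ (-(lev e)) - (1 + ε) ^ (-(plev e)))
      = ∑ k ∈ Finset.range L,
          ((U.filter fun e => lev e ≤ (k:ℤ) ∧ (k:ℤ) < plev e).card : ℝ) * f k := by
    rw [Finset.sum_congr rfl (fun e he =>
      tele (lev e) (plev e) (hbounds e he).1 (hbounds e he).2.1
        (hbounds e he).2.2), Finset.sum_comm]
    exact Finset.sum_congr rfl fun k _ => card_sum _ _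
  rw [hLHS, hRHS, Finset.mul_sum]
  apply Finset.sum_le_sum
  intro k hk
  have hA := hratio k hk
  have hsub : (U.filter fun e => lev e ≤ (k:ℤ) ∧ (k:ℤ) < (L:ℤ)).card
      ≤ (U.filter fun e => lev e ≤ (k:ℤ) ∧ (k:ℤ) < plev e).card
        + (U.filter fun e => plev e ≤ (k:ℤ)).card := by
    refine le_trans (Finset.card_le_card ?_) (Finset.card_union_le _ _)
    intro e he
    simp only [Finset.mem_filter, Finset.mem_union] at he ⊢
    rcases lt_or_ge (k:ℤ) (plev e) with h | h
    · exact Or.inl ⟨he.1, he.2.1, h⟩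
    · exact Or.inr ⟨he.1, h⟩
  have hcard : ((U.filter fun e => lev e ≤ (k:ℤ) ∧ (k:ℤ) < (L:ℤ)).card : ℝ)
      ≤ (1 + 2*ε) * ((U.filter fun e => lev e ≤ (k:ℤ) ∧ (k:ℤ) < plev e).card : ℝ) := by
    have h1 : ((U.filter fun e => lev e ≤ (k:ℤ) ∧ (k:ℤ) < (L:ℤ)).card : ℝ)
        ≤ ((U.filter fun e => lev e ≤ (k:ℤ) ∧ (k:ℤ) < plev e).card : ℝ)
          + ((U.filter fun e => plev e ≤ (k:ℤ)).card : ℝ) := by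
      exact_mod_cast hsub
    linarith
  calc ((U.filter fun e => lev e ≤ (k:ℤ) ∧ (k:ℤ) < (L:ℤ)).card : ℝ) * f k
      ≤ ((1 + 2*ε) * ((U.filter fun e => lev e ≤ (k:ℤ) ∧ (k:ℤ) < plev e).card : ℝ)) * f k :=
        mul_le_mul_of_nonneg_right hcard (hf0 k)
    _ = (1 + 2*ε) * (((U.filter fun e => lev e ≤ (k:ℤ) ∧ (k:ℤ) < plev e).card : ℝ) * f k) := by
        ring
end

section
/- Let β = 1+ε with 0 < ε, let c > 0 (the cost of a set), let n' ≥ 1, and let L ≥ ⌈log_β(n'/c)⌉ + 1. Suppose a : {0,…,L−1} → ℕ satisfies: (i) a(k) = 0 for all k with β^{k+1}·c < 1; (ii) a(k) < β^{k+1}·c for all k ≤ log_β(n'/c); and (iii) a(k) ≤ n' for all k. Then (1/ε)·∑_{k=0}^{L−1} (β^{−k} − β^{−k−1})·a(k) < (log_β(n') + 2 + 1/ε)·c. -/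
/-!
Since `(β^(-k) - β^(-k-1)) / ε = β^(-(k+1))` for `β = 1 + ε`, the sum is
`∑ a(k) / β^(k+1)`.
Levels with `β^(k+1) c < 1` contribute nothing. A level `k ≤ log_β(n'/c)` with
`β^(k+1) c ≥ 1` contributes less than `c`, and such levels lie in the interval
`[log_β(1/c) - 1, log_β(n'/c)]` of length `log_β n' + 1`, so there are at most `log_β n' + 2`
of them. Above `log_β(n'/c)` we have `n' < c β^k`, so `a(k) ≤ n'` makes the remaining terms a
geometric tail of total less than `c / (β - 1) = c / ε`.
-/

open Finset Real

theorem card_le_sub_add_one_of_forall_le_le (s : Finset ℕ) {x y : ℝ} (hxy : x ≤ y + 1)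
    (hs : ∀ k ∈ s, x ≤ k ∧ (k : ℝ) ≤ y) : (#s : ℝ) ≤ y - x + 1 := by
  rcases s.eq_empty_or_nonempty with rfl | hne
  · simp only [card_empty, Nat.cast_zero]; linarith
  have hsub : s ⊆ Icc (s.min' hne) (s.max' hne) := fun k hk =>
    mem_Icc.mpr ⟨s.min'_le k hk, s.le_max' k hk⟩
  have hcard : (#s : ℝ) ≤ (s.max' hne : ℝ) + 1 - s.min' hne := by
    have := card_le_card hsub
    rw [Nat.card_Icc] at this
    have hle : s.min' hne ≤ s.max' hne := s.min'_le_max' hne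
    rw [← Nat.cast_le (α := ℝ), Nat.cast_sub (by omega)] at this
    push_cast at this
    exact this
  linarith [(hs _ (s.min'_mem hne)).1, (hs _ (s.max'_mem hne)).2]

theorem sum_Ico_inv_pow_succ_lt {β : ℝ} (hβ : 1 < β) (m n : ℕ) :
    ∑ k ∈ Ico m n, (β ^ (k + 1))⁻¹ < (β ^ m)⁻¹ / (β - 1) := by
  have hβ1 : 0 < β - 1 := sub_pos.mpr hβ
  rcases lt_or_ge n m with hnm | hmn
  · rw [Ico_eq_empty_of_le hnm.le, sum_empty]
    positivity
  -- each term is the increment of `k ↦ -(β ^ k)⁻¹` divided by `β - 1`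
  have hterm : ∀ k, (β ^ (k + 1))⁻¹ = (-(β ^ (k + 1))⁻¹ - -(β ^ k)⁻¹) / (β - 1) := by
    intro k
    have : β ^ k ≠ 0 := by positivity
    field_simp
    ring
  rw [sum_congr rfl fun k _ => hterm k, ← sum_div, sum_Ico_sub (fun k => -(β ^ k)⁻¹) hmn]
  gcongr
  have : 0 < (β ^ n)⁻¹ := by positivity
  linarith

theorem sum_div_pow_succ_lt_of_le_mul_pow {β c n' : ℝ} (hβ : 1 < β) (hc : 0 < c) (hn' : 0 < n')
    (s : Finset ℕ) (hs : ∀ k ∈ s, n' ≤ c * β ^ k) :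
    ∑ k ∈ s, n' / β ^ (k + 1) < c / (β - 1) := by
  have hβ1 : 0 < β - 1 := sub_pos.mpr hβ
  rcases s.eq_empty_or_nonempty with rfl | hne
  · simpa using div_pos hc hβ1
  set m := s.min' hne
  have hsub : s ⊆ Ico m (s.max' hne + 1) := fun k hk =>
    mem_Ico.mpr ⟨s.min'_le k hk, Nat.lt_succ_of_le (s.le_max' k hk)⟩
  calc ∑ k ∈ s, n' / β ^ (k + 1)
      ≤ ∑ k ∈ Ico m (s.max' hne + 1), n' / β ^ (k + 1) :=
        sum_le_sum_of_subset_of_nonneg hsub fun _ _ _ => by positivity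
    _ = n' * ∑ k ∈ Ico m (s.max' hne + 1), (β ^ (k + 1))⁻¹ := by
        simp only [mul_sum, div_eq_mul_inv]
    _ < n' * ((β ^ m)⁻¹ / (β - 1)) :=
        mul_lt_mul_of_pos_left (sum_Ico_inv_pow_succ_lt hβ _ _) hn'
    _ ≤ c / (β - 1) := by
        rw [← mul_div_assoc]
        gcongr
        rw [← div_eq_mul_inv, div_le_iff₀ (by positivity)]
        exact hs m (s.min'_mem hne)

theorem sum_div_pow_succ_lt_of_level_bounds {β c n' : ℝ} (hβ : 1 < β) (hc : 0 < c)
    (hn' : 1 ≤ n') (L : ℕ) (a : ℕ → ℝ)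
    (h1 : ∀ k < L, β ^ (k + 1) * c < 1 → a k = 0)
    (h2 : ∀ k < L, (k : ℝ) ≤ logb β (n' / c) → a k ≤ β ^ (k + 1) * c)
    (h3 : ∀ k < L, a k ≤ n') :
    ∑ k ∈ range L, a k / β ^ (k + 1) < (logb β n' + 2) * c + c / (β - 1) := by
  have hn'0 : 0 < n' := by linarith
  set T := logb β (n' / c)
  set S := (range L).filter fun k : ℕ => (k : ℝ) ≤ T
  set Active := S.filter fun k => 1 ≤ β ^ (k + 1) * c
  rw [← sum_filter_add_sum_filter_not (range L) fun k : ℕ => (k : ℝ) ≤ T]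
  have hlow : ∑ k ∈ S, a k / β ^ (k + 1) ≤ #Active * c := by
    rw [← nsmul_eq_mul, ← sum_const, sum_filter (fun k : ℕ => 1 ≤ β ^ (k + 1) * c)]
    refine sum_le_sum fun k hk => ?_
    obtain ⟨hkL, hkT⟩ := mem_filter.mp hk
    have hkL := mem_range.mp hkL
    split_ifs with hact
    · rw [div_le_iff₀ (by positivity), mul_comm]
      exact h2 k hkL hkT
    · rw [h1 k hkL (not_le.mp hact), zero_div]
  have hcount : (#Active : ℝ) ≤ logb β n' + 2 := by
    have hT : T = logb β n' - logb β c := logb_div hn'0.ne' hc.ne'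
    have hlog : 0 ≤ logb β n' := logb_nonneg hβ hn'
    have := card_le_sub_add_one_of_forall_le_le Active (x := -logb β c - 1) (y := T)
      (by linarith) fun k hk => by
        obtain ⟨hkS, hact⟩ := mem_filter.mp hk
        refine ⟨?_, (mem_filter.mp hkS).2⟩
        have : logb β c⁻¹ ≤ k + 1 := by
          rw [logb_le_iff_le_rpow hβ (inv_pos.mpr hc), ← Nat.cast_add_one, rpow_natCast,
            inv_le_iff_one_le_mul₀ hc]
          exact hact
        rw [logb_inv] at this
        linarith
    linarith
  have hhigh : ∑ k ∈ (range L).filter (fun k : ℕ => ¬ (k : ℝ) ≤ T), a k / β ^ (k + 1)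
      < c / (β - 1) := by
    refine (sum_le_sum fun k hk => ?_).trans_lt
      (sum_div_pow_succ_lt_of_le_mul_pow hβ hc hn'0 _ fun k hk => ?_)
    · gcongr
      exact h3 k (mem_range.mp (mem_filter.mp hk).1)
    · have := (logb_lt_iff_lt_rpow hβ (div_pos hn'0 hc)).mp (not_le.mp (mem_filter.mp hk).2)
      rw [rpow_natCast, div_lt_iff₀ hc, mul_comm] at this
      exact this.le
  linarith [mul_le_mul_of_nonneg_right hcount hc.le]

theorem zpow_neg_sub_zpow_neg_sub_one {β : ℝ} (hβ : β ≠ 0) (k : ℕ) :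
    β ^ (-(k : ℤ)) - β ^ (-(k : ℤ) - 1) = (β - 1) / β ^ (k + 1) := by
  rw [zpow_sub_one₀ hβ, zpow_neg, zpow_natCast, pow_succ]
  field_simp

theorem three_case_level_sum_bound_general (ε c n' : ℝ) (hε : 0 < ε) (hc : 0 < c)
    (hn' : 1 ≤ n') (L : ℕ)
    (a : ℕ → ℕ)
    (h1 : ∀ k < L, (1 + ε) ^ ((k : ℤ) + 1) * c < 1 → a k = 0)
    (h2 : ∀ k < L, (k : ℝ) ≤ Real.logb (1 + ε) (n' / c) →
      (a k : ℝ) < (1 + ε) ^ ((k : ℤ) + 1) * c)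
    (h3 : ∀ k < L, (a k : ℝ) ≤ n') :
    (1 / ε) * ∑ k ∈ Finset.range L,
        ((1 + ε) ^ (-(k : ℤ)) - (1 + ε) ^ (-(k : ℤ) - 1)) * (a k : ℝ)
      < (Real.logb (1 + ε) n' + 2 + 1 / ε) * c := by
  have hβ : 1 < 1 + ε := lt_add_of_pos_right 1 hε
  have hzpow : ∀ k : ℕ, (1 + ε) ^ ((k : ℤ) + 1) = (1 + ε) ^ (k + 1) := fun k => by
    exact_mod_cast zpow_natCast (1 + ε) (k + 1)
  have hLHS : (1 / ε) * ∑ k ∈ range L,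
        ((1 + ε) ^ (-(k : ℤ)) - (1 + ε) ^ (-(k : ℤ) - 1)) * (a k : ℝ)
      = ∑ k ∈ range L, (a k : ℝ) / (1 + ε) ^ (k + 1) := by
    rw [mul_sum]
    refine sum_congr rfl fun k _ => ?_
    rw [zpow_neg_sub_zpow_neg_sub_one (by positivity), add_sub_cancel_left]
    field_simp
  have key := sum_div_pow_succ_lt_of_level_bounds hβ hc hn' L (fun k => (a k : ℝ))
    (fun k hk hlt => by exact_mod_cast h1 k hk (by rwa [hzpow]))
    (fun k hk hkT => by simpa only [hzpow] using (h2 k hk hkT).le) h3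
  rw [add_sub_cancel_left] at key
  rw [hLHS]
  linarith [show (Real.logb (1 + ε) n' + 2 + 1 / ε) * c
    = (Real.logb (1 + ε) n' + 2) * c + c / ε by ring]

/-- the three-case bound on the weighted sum of `|N_k(s)|`. -/
theorem three_case_level_sum_bound (ε c n' : ℝ) (hε : 0 < ε) (hc : 0 < c)
    (hn' : 1 ≤ n') (L : ℕ)
    (hL : ⌈Real.logb (1 + ε) (n' / c)⌉ + 1 ≤ (L : ℤ))
    (a : ℕ → ℕ)
    (h1 : ∀ k < L, (1 + ε) ^ ((k : ℤ) + 1) * c < 1 → a k = 0)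
    (h2 : ∀ k < L, (k : ℝ) ≤ Real.logb (1 + ε) (n' / c) →
      (a k : ℝ) < (1 + ε) ^ ((k : ℤ) + 1) * c)
    (h3 : ∀ k < L, (a k : ℝ) ≤ n') :
    (1 / ε) * ∑ k ∈ Finset.range L,
        ((1 + ε) ^ (-(k : ℤ)) - (1 + ε) ^ (-(k : ℤ) - 1)) * (a k : ℝ)
      < (Real.logb (1 + ε) n' + 2 + 1 / ε) * c :=
  three_case_level_sum_bound_general ε c n' hε hc hn' L a h1 h2 h3
end

section
/- Let β = 1+ε with ε ∈ (0,1), n ≥ 2, K = ⌈10·log_β n⌉, and suppose ε > 2/n^8. Let s be a set with cost(s) ∈ (0,1] and toplev(s) = ⌈log_β(n/cost(s))⌉ ≥ (l+2)·K for some integer l ≥ −1, and let k₀ ≤ (l+1)·K. Then cost(s) ≤ n·β^{1−toplev(s)} ≤ (ε/((1+2ε)·n))·β^{−k₀−1}. -/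
/-- sets in windows two or more above the lowest nonempty level
have negligible cost (the chain of inequalities (5.1)). -/
theorem high_window_cost_negligible (ε : ℝ) (n : ℕ)
    (hε0 : 0 < ε) (hε1 : ε < 1) (hn : 2 ≤ n)
    (hεn : 2 / (n : ℝ) ^ 8 < ε)
    (K : ℤ) (hK : K = ⌈10 * Real.logb (1 + ε) n⌉)
    (cost : ℝ) (hc0 : 0 < cost) (hc1 : cost ≤ 1)
    (toplev : ℤ) (htop : toplev = ⌈Real.logb (1 + ε) ((n : ℝ) / cost)⌉)
    (l : ℤ) (hl : -1 ≤ l) (htl : (l + 2) * K ≤ toplev)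
    (k₀ : ℤ) (hk₀ : k₀ ≤ (l + 1) * K) :
    cost ≤ (n : ℝ) * (1 + ε) ^ (1 - toplev) ∧
      (n : ℝ) * (1 + ε) ^ (1 - toplev)
        ≤ (ε / ((1 + 2 * ε) * n)) * (1 + ε) ^ (-k₀ - 1) := by
  have hb1 : 1 < 1 + ε := by linarith
  have hb0 : (0:ℝ) < 1 + ε := by linarith
  have hbne : (1 + ε) ≠ 1 := by linarith
  have hn1 : (1:ℝ) ≤ (n:ℝ) := by exact_mod_cast Nat.one_le_of_lt hn
  have hn0 : (0:ℝ) < (n:ℝ) := by linarith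
  have hn8 : (0:ℝ) < (n:ℝ)^8 := by positivity
  have hn256 : (256:ℝ) ≤ (n:ℝ)^8 := by
    calc (256:ℝ) = 2^8 := by norm_num
    _ ≤ (n:ℝ)^8 := by
      apply pow_le_pow_left₀ (by norm_num)
      exact_mod_cast hn
  have hratio : (0:ℝ) < (n:ℝ)/cost := by positivity
  -- Part 1
  have h1 : (toplev:ℝ) < Real.logb (1+ε) ((n:ℝ)/cost) + 1 := by
    rw [htop]; exact_mod_cast Int.ceil_lt_add_one _
  have h2 : (1+ε) ^ (toplev - 1) ≤ (n:ℝ)/cost := by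
    have : (1+ε) ^ ((toplev:ℝ) - 1) ≤ (1+ε) ^ (Real.logb (1+ε) ((n:ℝ)/cost)) :=
      Real.rpow_le_rpow_of_exponent_le hb1.le (by linarith)
    rw [Real.rpow_logb hb0 hbne hratio] at this
    calc (1+ε) ^ (toplev - 1) = (1+ε) ^ (((toplev - 1 : ℤ)):ℝ) := by
          rw [Real.rpow_intCast]
      _ = (1+ε) ^ ((toplev:ℝ) - 1) := by push_cast; ring_nf
      _ ≤ (n:ℝ)/cost := this
  have part1 : cost ≤ (n:ℝ) * (1+ε) ^ (1 - toplev) := by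
    have hz : (0:ℝ) < (1+ε) ^ (toplev - 1) := zpow_pos hb0 _
    have h3 : cost * (1+ε) ^ (toplev - 1) ≤ (n:ℝ) := by
      rw [div_eq_mul_inv] at h2
      calc cost * (1+ε) ^ (toplev - 1) ≤ cost * ((n:ℝ) * cost⁻¹) := by
            nlinarith
        _ = (n:ℝ) := by field_simp
    have : (1+ε) ^ (1 - toplev) = ((1+ε) ^ (toplev - 1))⁻¹ := by
      rw [← zpow_neg]; ring_nf
    rw [this, ← div_eq_mul_inv, le_div_iff₀ hz]
    exact h3
  -- Lemma A : n^10 ≤ (1+ε)^K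
  have hA : (n:ℝ)^(10:ℕ) ≤ (1+ε) ^ K := by
    have hKle : 10 * Real.logb (1+ε) n ≤ (K:ℝ) := by
      rw [hK]; exact Int.le_ceil _
    have : (1+ε) ^ (10 * Real.logb (1+ε) n) ≤ (1+ε) ^ ((K:ℝ)) :=
      Real.rpow_le_rpow_of_exponent_le hb1.le hKle
    rw [Real.rpow_intCast] at this
    calc (n:ℝ)^(10:ℕ) = ((n:ℝ) ^ ((10:ℕ):ℝ)) := by
          rw [Real.rpow_natCast]
      _ = (1+ε) ^ (Real.logb (1+ε) n * 10) := by
          rw [Real.rpow_mul hb0.le, Real.rpow_logb hb0 hbne hn0]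
          norm_num
      _ = (1+ε) ^ (10 * Real.logb (1+ε) n) := by ring_nf
      _ ≤ (1+ε) ^ K := this
  -- Lemma B : (1+2ε)(1+ε)^2 ≤ ε n^8
  have hB : (1 + 2*ε) * (1+ε)^2 ≤ ε * (n:ℝ)^8 := by
    have hεn' : 2 < ε * (n:ℝ)^8 := by
      rw [div_lt_iff₀ hn8] at hεn; linarith
    rcases le_or_gt ε (1/16) with h | h
    · nlinarith
    · nlinarith
  -- Main: n^2 (1+2ε)(1+ε)^2 ≤ ε (1+ε)^K
  have hmain : (n:ℝ)^2 * ((1 + 2*ε) * (1+ε)^2) ≤ ε * (1+ε) ^ K := by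
    calc (n:ℝ)^2 * ((1 + 2*ε) * (1+ε)^2) ≤ (n:ℝ)^2 * (ε * (n:ℝ)^8) := by
          nlinarith
      _ = ε * (n:ℝ)^(10:ℕ) := by ring
      _ ≤ ε * (1+ε) ^ K := mul_le_mul_of_nonneg_left hA hε0.le
  have hC0 : (0:ℝ) < ε / ((1 + 2*ε) * n) := by positivity
  -- Step c
  have hc : (n:ℝ) * (1+ε) ^ (1 - (l+2)*K) ≤ (ε / ((1 + 2*ε) * n)) * (1+ε) ^ (-(l+1)*K - 1) := by
    have hsplit : (1+ε) ^ (1 - (l+2)*K) = (1+ε) ^ ((2:ℤ) - K) * (1+ε) ^ (-(l+1)*K - 1) := by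
      rw [← zpow_add₀ (ne_of_gt hb0)]; ring_nf
    rw [hsplit, ← mul_assoc]
    apply mul_le_mul_of_nonneg_right _ (zpow_pos hb0 _).le
    have h2K : (1+ε) ^ ((2:ℤ) - K) = (1+ε)^2 / (1+ε)^K := by
      rw [zpow_sub₀ (ne_of_gt hb0)]; norm_cast
    rw [h2K, div_eq_mul_inv, ← mul_assoc, div_eq_mul_inv]
    have hKpos : (0:ℝ) < (1+ε)^K := zpow_pos hb0 _
    rw [← div_eq_mul_inv, ← div_eq_mul_inv, div_le_div_iff₀ hKpos (by positivity)]
    nlinarith [hmain]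
  have step_a : (1+ε) ^ (1 - toplev) ≤ (1+ε) ^ (1 - (l+2)*K) :=
    zpow_le_zpow_right₀ hb1.le (by linarith)
  have step_b : (1+ε) ^ (-(l+1)*K - 1) ≤ (1+ε) ^ (-k₀ - 1) :=
    zpow_le_zpow_right₀ hb1.le (by linarith)
  refine ⟨part1, ?_⟩
  calc (n:ℝ) * (1+ε) ^ (1 - toplev) ≤ (n:ℝ) * (1+ε) ^ (1 - (l+2)*K) := mul_le_mul_of_nonneg_left step_a hn0.le
    _ ≤ (ε / ((1 + 2*ε) * n)) * (1+ε) ^ (-(l+1)*K - 1) := hc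
    _ ≤ (ε / ((1 + 2*ε) * n)) * (1+ε) ^ (-k₀ - 1) := mul_le_mul_of_nonneg_left step_b hC0.le
end
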